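/- Let K be a finitely generated free group and let H be a maximal proper compressed subgroup of K (i.e. H is compressed in K, H ≠ K, and there is no compressed subgroup L of K with H < L < K), or a maximal proper retract of K (defined analogously for retracts). Then either H ≤alg K, or H is a free factor of K of rank rk(K) − 1. -/

import Mathlib

/-! Common definitions: free factors, algebraic extensions, rank, etc.,
following Miasnikov–Ventura–Weil, "Algebraic extensions in free groups". -/

section Defs

variable {G : Type*} [Group G]

/-- `H` is a free factor of `K` (`H ≤ff K`): there is a subgroup `L` such that the
homomorphism from the external free product `H ∗ L` to `G` induced by the inclusions
is injective with image `K`. -/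
def IsFreeFactor (H K : Subgroup G) : Prop :=
  ∃ L : Subgroup G,
    Function.Injective ⇑(Monoid.Coprod.lift H.subtype L.subtype) ∧
    (Monoid.Coprod.lift H.subtype L.subtype).range = K

/-- `x` is `K`-algebraic over `H`: `x` belongs to every free factor of `K` containing `H`. -/
def IsAlgebraicOver (H K : Subgroup G) (x : G) : Prop :=
  ∀ L : Subgroup G, IsFreeFactor L K → H ≤ L → x ∈ L

/-- The extension `H ≤ K` is algebraic (`H ≤alg K`). -/
def IsAlgebraicExt (H K : Subgroup G) : Prop :=
  H ≤ K ∧ ∀ x ∈ K, IsAlgebraicOver H K x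

/-- The rank of a subgroup: minimal number of generators, as an extended natural
(`⊤` if the subgroup is not finitely generated). For finitely generated subgroups of
free groups this is the rank of a basis. -/
noncomputable def grpRank (H : Subgroup G) : ℕ∞ :=
  ⨅ (S : Finset G) (_ : Subgroup.closure (S : Set G) = H), (S.card : ℕ∞)

/-- `H ≤ealg K`: the extension splits as a finite chain of extensions, each of which
is both elementary and algebraic. -/
def IsEAlgebraicExt (H K : Subgroup G) : Prop :=
  Relation.ReflTransGen
    (fun A B : Subgroup G => (∃ x : G, B = A ⊔ Subgroup.zpowers x) ∧ IsAlgebraicExt A B) H K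

/-- A Takahasi family for `H`: a set of subgroups, each containing `H`, such that every
extension of `H` admits a member of the family as a free factor. -/
def IsTakahasiFamily (H : Subgroup G) (𝓛 : Set (Subgroup G)) : Prop :=
  (∀ L ∈ 𝓛, H ≤ L) ∧ ∀ K : Subgroup G, H ≤ K → ∃ L ∈ 𝓛, IsFreeFactor L K

end Defs

section Defs2

variable {G : Type*} [Group G]

/-- `H` is compressed in `G`: its rank is at most that of any subgroup containing it. -/
def IsCompressed (H : Subgroup G) : Prop :=
  ∀ L : Subgroup G, H ≤ L → grpRank H ≤ grpRank L

/-- `H` is a retract of `G`: the identity of `H` extends to a homomorphism `G → H`. -/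
def IsRetract (H : Subgroup G) : Prop :=
  ∃ r : G →* ↥H, ∀ h : ↥H, r ↑h = h

end Defs2

section Helpers
variable {G : Type*} [Group G]

lemma grpRank_le_card {H : Subgroup G} (S : Finset G)
    (h : Subgroup.closure (S : Set G) = H) : grpRank H ≤ (S.card : ℕ∞) :=
  iInf₂_le S h

lemma grpRank_exists {H : Subgroup G} (h : grpRank H ≠ ⊤) :
    ∃ S : Finset G, Subgroup.closure (S : Set G) = H ∧ (S.card : ℕ∞) = grpRank H := by
  have hne : ∃ S : Finset G, Subgroup.closure (S : Set G) = H := by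
    by_contra hc
    push_neg at hc
    apply h
    rw [grpRank]
    simp [hc]
  set P : Set ℕ := {n : ℕ | ∃ S : Finset G, Subgroup.closure (S : Set G) = H ∧ S.card = n} with hP
  have hPne : P.Nonempty := by obtain ⟨S, hS⟩ := hne; exact ⟨S.card, S, hS, rfl⟩
  obtain ⟨S, hS, hcard⟩ := Nat.sInf_mem hPne
  refine ⟨S, hS, le_antisymm ?_ (grpRank_le_card S hS)⟩
  refine le_iInf₂ fun T hT => ?_
  have : sInf P ≤ T.card := Nat.sInf_le ⟨T, hT, rfl⟩
  exact_mod_cast hcard ▸ this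

open scoped Classical in
lemma isCompressed_of_isRetract {H : Subgroup G} (h : IsRetract H) : IsCompressed H := by
  obtain ⟨r, hr⟩ := h
  intro L hL
  refine le_iInf₂ fun S hS => ?_
  set f : G →* G := H.subtype.comp r with hf
  have hmap : Subgroup.map f L = H := by
    apply le_antisymm
    · rintro _ ⟨x, _, rfl⟩
      exact (r x).2
    · intro y hy
      exact ⟨y, hL hy, by simpa [hf] using congrArg Subtype.val (hr ⟨y, hy⟩)⟩
  have hT : Subgroup.closure ((S.image f : Finset G) : Set G) = H := by
    rw [Finset.coe_image, ← MonoidHom.map_closure, hS, hmap]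
  calc grpRank H ≤ ((S.image f).card : ℕ∞) := grpRank_le_card _ hT
    _ ≤ (S.card : ℕ∞) := by exact_mod_cast Finset.card_image_le

lemma isRetract_of_isFreeFactor_top {L : Subgroup G} (h : IsFreeFactor L ⊤) : IsRetract L := by
  obtain ⟨M, hinj, hran⟩ := h
  set φ := Monoid.Coprod.lift L.subtype M.subtype with hφ
  have hsurj : Function.Surjective φ := fun x => by
    have : x ∈ φ.range := hran ▸ Subgroup.mem_top x
    exact this
  let e := MulEquiv.ofBijective φ ⟨hinj, hsurj⟩
  refine ⟨(Monoid.Coprod.lift (MonoidHom.id ↥L) 1).comp e.symm.toMonoidHom, fun x => ?_⟩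
  have h1 : e.symm ↑x = Monoid.Coprod.inl x := by
    apply e.injective
    rw [MulEquiv.apply_symm_apply]
    show _ = φ (Monoid.Coprod.inl x)
    rw [hφ, Monoid.Coprod.lift_apply_inl]
    rfl
  simp [h1, Monoid.Coprod.lift_apply_inl]

lemma closure_range_isFreeGroup_of (G : Type*) [Group G] [IsFreeGroup G] :
    Subgroup.closure (Set.range (IsFreeGroup.of : IsFreeGroup.Generators G → G)) = ⊤ := by
  set c := Subgroup.closure (Set.range (IsFreeGroup.of : IsFreeGroup.Generators G → G)) with hc
  set s : G →* ↥c := IsFreeGroup.lift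
    (fun i => (⟨IsFreeGroup.of i, Subgroup.subset_closure ⟨i, rfl⟩⟩ : ↥c)) with hs
  have hcomp : c.subtype.comp s = MonoidHom.id G := by
    apply IsFreeGroup.ext_hom
    intro a
    simp [hs, IsFreeGroup.lift_of]
  rw [eq_top_iff]
  intro x _
  have : c.subtype (s x) = x := by
    have := congrArg (fun f : G →* G => f x) hcomp
    simpa using this
  exact this ▸ (s x).2

lemma subgroup_eq_closure_of {G : Type u} [Group G] [IsFreeGroup G] (M : Subgroup G) :
    Subgroup.closure (Set.range fun i : IsFreeGroup.Generators ↥M =>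
      ((IsFreeGroup.of i : ↥M) : G)) = M := by
  apply le_antisymm
  · rw [Subgroup.closure_le]
    rintro _ ⟨i, rfl⟩
    exact (IsFreeGroup.of i : ↥M).2
  · intro m hm
    have h1 : (⟨m, hm⟩ : ↥M) ∈ Subgroup.closure
        (Set.range (IsFreeGroup.of : IsFreeGroup.Generators ↥M → ↥M)) := by
      rw [closure_range_isFreeGroup_of]; trivial
    have h2 : ∀ (x : ↥M), x ∈ Subgroup.closure
        (Set.range (IsFreeGroup.of : IsFreeGroup.Generators ↥M → ↥M)) →
        (x : G) ∈ Subgroup.closure (Set.range fun i : IsFreeGroup.Generators ↥M =>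
          ((IsFreeGroup.of i : ↥M) : G)) := by
      intro x hx
      induction hx using Subgroup.closure_induction with
      | mem y hy => obtain ⟨i, rfl⟩ := hy; exact Subgroup.subset_closure ⟨i, rfl⟩
      | one => simpa using one_mem _
      | mul y z _ _ hy hz => simpa using mul_mem hy hz
      | inv y _ hy => simpa using inv_mem hy
    exact h2 _ h1

end Helpers


/-- A maximal proper compressed subgroup (resp. maximal proper retract) `H` of a
finitely generated free group `K` is either algebraically dense in `K`, or a free
factor of `K` of rank `rk K - 1`. -/
theorem maximal_compressed_or_retract {K : Type*} [Group K] [IsFreeGroup K] [Group.FG K]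
    (H : Subgroup K)
    (hmax :
      (IsCompressed H ∧ H ≠ ⊤ ∧
        ¬ ∃ L : Subgroup K, IsCompressed L ∧ H < L ∧ L < ⊤) ∨
      (IsRetract H ∧ H ≠ ⊤ ∧
        ¬ ∃ L : Subgroup K, IsRetract L ∧ H < L ∧ L < ⊤)) :
    IsAlgebraicExt H ⊤ ∨
      (IsFreeFactor H (⊤ : Subgroup K) ∧
        grpRank H = grpRank (⊤ : Subgroup K) - 1) := by
  classical
  by_cases halg : ∀ x ∈ (⊤ : Subgroup K), IsAlgebraicOver H ⊤ x
  · exact Or.inl ⟨le_top, halg⟩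
  push_neg at halg
  obtain ⟨x, -, hx⟩ := halg
  simp only [IsAlgebraicOver] at hx
  push_neg at hx
  obtain ⟨L, hLff, hHL, hxL⟩ := hx
  have hne : H ≠ ⊤ := hmax.elim (fun h => h.2.1) (fun h => h.2.1)
  have hkey : ∀ L' : Subgroup K, IsRetract L' → H < L' → L' < ⊤ → False := by
    rcases hmax with ⟨-, -, hn⟩ | ⟨-, -, hn⟩
    · exact fun L' hr h1 h2 => hn ⟨L', isCompressed_of_isRetract hr, h1, h2⟩
    · exact fun L' hr h1 h2 => hn ⟨L', hr, h1, h2⟩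
  have hLlt : L < ⊤ := lt_top_iff_ne_top.2 fun h => hxL (h ▸ Subgroup.mem_top x)
  have hHLeq : H = L := by
    by_contra hne'
    exact hkey L (isRetract_of_isFreeFactor_top hLff) (lt_of_le_of_ne hHL hne') hLlt
  subst hHLeq
  refine Or.inr ⟨hLff, ?_⟩
  obtain ⟨M, hinj, hran⟩ := hLff
  set φ := Monoid.Coprod.lift H.subtype M.subtype with hφ
  have hsurj : Function.Surjective φ := fun y =>
    (hran ▸ Subgroup.mem_top y : y ∈ φ.range)
  set e := MulEquiv.ofBijective φ ⟨hinj, hsurj⟩ with he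
  have heH : ∀ h : ↥H, e.symm ↑h = Monoid.Coprod.inl h := by
    intro h
    apply e.injective
    rw [MulEquiv.apply_symm_apply]
    show (↑h : K) = φ (Monoid.Coprod.inl h)
    rw [hφ, Monoid.Coprod.lift_apply_inl]
    rfl
  have heM : ∀ m : ↥M, e.symm ↑m = Monoid.Coprod.inr m := by
    intro m
    apply e.injective
    rw [MulEquiv.apply_symm_apply]
    show (↑m : K) = φ (Monoid.Coprod.inr m)
    rw [hφ, Monoid.Coprod.lift_apply_inr]
    rfl
  have hsup : H ⊔ M = ⊤ := by
    rw [← hran, hφ, Monoid.Coprod.range_lift, Subgroup.range_subtype, Subgroup.range_subtype]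
  have hdisj : ∀ y : K, y ∈ H → y ∈ M → y = 1 := by
    intro y h1 h2
    have h3 : φ (Monoid.Coprod.inl ⟨y, h1⟩) = φ (Monoid.Coprod.inr ⟨y, h2⟩) := by
      rw [hφ, Monoid.Coprod.lift_apply_inl, Monoid.Coprod.lift_apply_inr]
      rfl
    have h4 := congrArg (Monoid.Coprod.lift (MonoidHom.id ↥H) (1 : ↥M →* ↥H)) (hinj h3)
    rw [Monoid.Coprod.lift_apply_inl, Monoid.Coprod.lift_apply_inr] at h4
    simpa using congrArg Subtype.val h4
  set b : IsFreeGroup.Generators ↥M → K := fun i => ((IsFreeGroup.of i : ↥M) : K) with hb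
  have hMcl : Subgroup.closure (Set.range b) = M := subgroup_eq_closure_of M
  have hbM : ∀ i, b i ∈ M := fun i => (IsFreeGroup.of i : ↥M).2
  have hbne : ∀ i, b i ≠ 1 := by
    intro i hbi
    have h1 : (IsFreeGroup.of i : ↥M) = 1 := Subtype.ext hbi
    have h2 : (IsFreeGroup.lift (fun _ : IsFreeGroup.Generators ↥M =>
        Multiplicative.ofAdd (1 : ℤ)) : ↥M →* Multiplicative ℤ) (IsFreeGroup.of i) = 1 := by
      rw [h1, map_one]
    rw [IsFreeGroup.lift_of] at h2
    simpa using h2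
  have hMbot : M ≠ ⊥ := by
    intro hM
    apply hne
    rw [hM, sup_bot_eq] at hsup
    exact hsup
  have hιne : Nonempty (IsFreeGroup.Generators ↥M) := by
    by_contra h
    rw [not_nonempty_iff] at h
    apply hMbot
    rw [← hMcl, Set.range_eq_empty, Subgroup.closure_empty]
  have hsub : ∀ i j : IsFreeGroup.Generators ↥M, i = j := by
    by_contra h
    push_neg at h
    obtain ⟨i, j, hij⟩ := h
    set z := b i with hz
    set L' := H ⊔ Subgroup.zpowers z with hL'
    have hzL' : z ∈ L' := Subgroup.mem_sup_right (Subgroup.mem_zpowers z)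
    set g : ↥M →* ↥L' := IsFreeGroup.lift (fun k => if k = i then ⟨z, hzL'⟩ else 1) with hg
    set r : K →* ↥L' :=
      (Monoid.Coprod.lift (Subgroup.inclusion le_sup_left) g).comp e.symm.toMonoidHom with hr
    have hrH : ∀ hh : ↥H, ((r ↑hh : ↥L') : K) = ↑hh := by
      intro hh
      simp only [hr, MonoidHom.comp_apply, MulEquiv.coe_toMonoidHom, heH hh,
        Monoid.Coprod.lift_apply_inl]
      rfl
    have hrz : ((r z : ↥L') : K) = z := by
      have hez : e.symm z = Monoid.Coprod.inr (IsFreeGroup.of i) := heM (IsFreeGroup.of i)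
      simp only [hr, MonoidHom.comp_apply, MulEquiv.coe_toMonoidHom, hez,
        Monoid.Coprod.lift_apply_inr, hg, IsFreeGroup.lift_of, if_pos rfl]
      rfl
    have hcl' : L' = Subgroup.closure ((H : Set K) ∪ {z}) := by
      rw [Subgroup.closure_union, Subgroup.closure_eq, ← Subgroup.zpowers_eq_closure]
    have hrfix : ∀ y ∈ L', ((r y : ↥L') : K) = y := by
      intro y hy
      rw [hcl'] at hy
      induction hy using Subgroup.closure_induction with
      | mem w hw =>
        rcases hw with hw | hw
        · exact hrH ⟨w, hw⟩
        · rw [Set.mem_singleton_iff] at hw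
          rw [hw]
          exact hrz
      | one => simp
      | mul u v hu hv hmu hmv => rw [map_mul]; push_cast; rw [hmu, hmv]
      | inv u hu hmu => rw [map_inv]; push_cast; rw [hmu]
    have hret : IsRetract L' := ⟨r, fun y => Subtype.ext (hrfix ↑y y.2)⟩
    have hzH : z ∉ H := fun hzh => hbne i (hdisj z hzh (hbM i))
    have hlt1 : H < L' := lt_of_le_of_ne le_sup_left fun hEq => hzH (by rw [hEq]; exact hzL')
    set χM : ↥M →* Multiplicative ℤ :=
      IsFreeGroup.lift (fun k => if k = j then Multiplicative.ofAdd (1 : ℤ) else 1) with hχM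
    set χ : K →* Multiplicative ℤ :=
      (Monoid.Coprod.lift 1 χM).comp e.symm.toMonoidHom with hχ
    have hχH : ∀ hh : ↥H, χ ↑hh = 1 := by
      intro hh
      simp only [hχ, MonoidHom.comp_apply, MulEquiv.coe_toMonoidHom, heH hh,
        Monoid.Coprod.lift_apply_inl, MonoidHom.one_apply]
    have hχb : ∀ k, χ (b k) = if k = j then Multiplicative.ofAdd (1 : ℤ) else 1 := by
      intro k
      have hez : e.symm (b k) = Monoid.Coprod.inr (IsFreeGroup.of k) := heM (IsFreeGroup.of k)
      simp only [hχ, MonoidHom.comp_apply, MulEquiv.coe_toMonoidHom, hez,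
        Monoid.Coprod.lift_apply_inr, hχM, IsFreeGroup.lift_of]
    have hχL' : ∀ y ∈ L', χ y = 1 := by
      intro y hy
      rw [hcl'] at hy
      induction hy using Subgroup.closure_induction with
      | mem w hw =>
        rcases hw with hw | hw
        · exact hχH ⟨w, hw⟩
        · rw [Set.mem_singleton_iff] at hw
          rw [hw, hz, hχb i, if_neg hij]
      | one => simp
      | mul u v hu hv hmu hmv => rw [map_mul, hmu, hmv, mul_one]
      | inv u hu hmu => rw [map_inv, hmu, inv_one]
    have hbjL' : b j ∉ L' := by
      intro hmem
      have h1 := hχL' (b j) hmem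
      rw [hχb j, if_pos rfl] at h1
      simpa using h1
    have hlt2 : L' < ⊤ := lt_top_iff_ne_top.2 fun hEq => hbjL' (by rw [hEq]; trivial)
    exact hkey L' hret hlt1 hlt2
  obtain ⟨i₀⟩ := hιne
  have hrangeb : Set.range b = {b i₀} := by
    apply Set.eq_singleton_iff_unique_mem.mpr
    exact ⟨⟨i₀, rfl⟩, by rintro _ ⟨k, rfl⟩; rw [hsub k i₀]⟩
  have hMz : M = Subgroup.closure {b i₀} := by rw [← hMcl, hrangeb]
  set a : IsFreeGroup.Generators ↥H → K := fun i => ((IsFreeGroup.of i : ↥H) : K) with ha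
  have hHcl : Subgroup.closure (Set.range a) = H := subgroup_eq_closure_of H
  set V := (Option (IsFreeGroup.Generators ↥H) →₀ ℚ) with hV
  set θH : ↥H →* Multiplicative V :=
    IsFreeGroup.lift (fun i => Multiplicative.ofAdd (Finsupp.single (some i) (1 : ℚ))) with hθH
  set θM : ↥M →* Multiplicative V :=
    IsFreeGroup.lift (fun _ => Multiplicative.ofAdd (Finsupp.single none (1 : ℚ))) with hθM
  set ψ : K →* Multiplicative V := (Monoid.Coprod.lift θH θM).comp e.symm.toMonoidHom with hψ
  set A : K → V := fun y => Multiplicative.toAdd (ψ y) with hA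
  have hAa : ∀ i, A (a i) = Finsupp.single (some i) 1 := by
    intro i
    simp only [hA, hψ, MonoidHom.comp_apply, MulEquiv.coe_toMonoidHom, ha, heH (IsFreeGroup.of i),
      Monoid.Coprod.lift_apply_inl, hθH, IsFreeGroup.lift_of]
    rfl
  have hAz : A (b i₀) = Finsupp.single none 1 := by
    simp only [hA, hψ, MonoidHom.comp_apply, MulEquiv.coe_toMonoidHom, hb, heM (IsFreeGroup.of i₀),
      Monoid.Coprod.lift_apply_inr, hθM, IsFreeGroup.lift_of]
    rfl
  have hcard_ineq : ∀ S : Finset K, Subgroup.closure (S : Set K) = ⊤ →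
      (Cardinal.mk (Option (IsFreeGroup.Generators ↥H)) : Cardinal) ≤ S.card := by
    intro S hS
    set s : Set V := A '' ↑S with hs
    have hspan1 : ∀ y : K, A y ∈ Submodule.span ℚ s := by
      intro y
      have hy : y ∈ Subgroup.closure (S : Set K) := by rw [hS]; trivial
      induction hy using Subgroup.closure_induction with
      | mem w hw => exact Submodule.subset_span ⟨w, hw, rfl⟩
      | one =>
        have h0 : A 1 = 0 := by simp [hA]
        exact h0 ▸ Submodule.zero_mem _
      | mul u v hu hv hmu hmv =>
        have h0 : A (u * v) = A u + A v := by simp [hA]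
        exact h0 ▸ Submodule.add_mem _ hmu hmv
      | inv u hu hmu =>
        have h0 : A u⁻¹ = -A u := by simp [hA]
        exact h0 ▸ Submodule.neg_mem _ hmu
    have hspan_top : Submodule.span ℚ s = ⊤ := by
      rw [eq_top_iff]
      have hsingle : ∀ o : Option (IsFreeGroup.Generators ↥H),
          Finsupp.single o (1 : ℚ) ∈ Submodule.span ℚ s := by
        rintro (_ | i)
        · exact hAz ▸ hspan1 (b i₀)
        · exact hAa i ▸ hspan1 (a i)
      calc (⊤ : Submodule ℚ V)
          = Submodule.span ℚ (Set.range
            (Finsupp.basisSingleOne (R := ℚ) (ι := Option (IsFreeGroup.Generators ↥H)))) :=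
            (Module.Basis.span_eq _).symm
        _ ≤ Submodule.span ℚ s := Submodule.span_le.2 (by
            rintro _ ⟨o, rfl⟩
            simpa [Finsupp.coe_basisSingleOne] using hsingle o)
    have hrank1 : Module.rank ℚ V ≤ Cardinal.mk s :=
      calc Module.rank ℚ V = Module.rank ℚ (⊤ : Submodule ℚ V) := (rank_top ℚ V).symm
        _ = Module.rank ℚ (Submodule.span ℚ s) := by rw [hspan_top]
        _ ≤ Cardinal.mk s := rank_span_le s
    have hrank2 : Module.rank ℚ V = Cardinal.mk (Option (IsFreeGroup.Generators ↥H)) := by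
      show Module.rank ℚ (Option (IsFreeGroup.Generators ↥H) →₀ ℚ) =
        Cardinal.mk (Option (IsFreeGroup.Generators ↥H))
      simp [rank_finsupp_self]
    calc (Cardinal.mk (Option (IsFreeGroup.Generators ↥H)) : Cardinal)
        = Module.rank ℚ V := hrank2.symm
      _ ≤ Cardinal.mk s := hrank1
      _ ≤ Cardinal.mk (S : Set K) := Cardinal.mk_image_le
      _ = S.card := Cardinal.mk_coe_finset
  obtain ⟨S₀, hS₀⟩ : ∃ S : Finset K, Subgroup.closure (S : Set K) = ⊤ :=
    Group.fg_def.mp inferInstance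
  have hfin : Finite (IsFreeGroup.Generators ↥H) := by
    rw [← Cardinal.lt_aleph0_iff_finite]
    have h1 := hcard_ineq S₀ hS₀
    rw [Cardinal.mk_option] at h1
    exact lt_of_le_of_lt (le_trans le_self_add h1) (Cardinal.nat_lt_aleph0 _)
  haveI := hfin
  haveI : Fintype (IsFreeGroup.Generators ↥H) := Fintype.ofFinite _
  have hgrpH : grpRank H ≤ (Fintype.card (IsFreeGroup.Generators ↥H) : ℕ∞) := by
    have hTcl : Subgroup.closure ((Finset.univ.image a : Finset K) : Set K) = H := by
      rw [Finset.coe_image, Finset.coe_univ, Set.image_univ, hHcl]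
    calc grpRank H ≤ ((Finset.univ.image a).card : ℕ∞) := grpRank_le_card _ hTcl
      _ ≤ _ := by
          exact_mod_cast Finset.card_image_le.trans (le_of_eq Finset.card_univ)
  have hR5 : grpRank H + 1 ≤ grpRank (⊤ : Subgroup K) := by
    refine le_iInf₂ fun S hS => ?_
    have h1 := hcard_ineq S hS
    rw [Cardinal.mk_option, Cardinal.mk_fintype] at h1
    have h2 : Fintype.card (IsFreeGroup.Generators ↥H) + 1 ≤ S.card := by exact_mod_cast h1
    calc grpRank H + 1 ≤ (Fintype.card (IsFreeGroup.Generators ↥H) : ℕ∞) + 1 :=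
          add_le_add_left hgrpH 1
      _ ≤ (S.card : ℕ∞) := by exact_mod_cast h2
  have hHne : grpRank H ≠ ⊤ := by
    intro hEq
    rw [hEq] at hgrpH
    exact absurd (top_le_iff.mp hgrpH) (by simp)
  have hR4 : grpRank (⊤ : Subgroup K) ≤ grpRank H + 1 := by
    obtain ⟨SH, hSHcl, hSHcard⟩ := grpRank_exists hHne
    have hTcl : Subgroup.closure ((insert (b i₀) SH : Finset K) : Set K) = ⊤ := by
      rw [Finset.coe_insert, ← Set.singleton_union, Subgroup.closure_union, hSHcl, ← hMz,
        sup_comm, hsup]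
    calc grpRank (⊤ : Subgroup K) ≤ ((insert (b i₀) SH).card : ℕ∞) := grpRank_le_card _ hTcl
      _ ≤ (SH.card : ℕ∞) + 1 := by exact_mod_cast Finset.card_insert_le _ _
      _ = grpRank H + 1 := by rw [hSHcard]
  have hfinal : grpRank (⊤ : Subgroup K) = grpRank H + 1 := le_antisymm hR4 hR5
  rw [hfinal]
  obtain ⟨n, hn⟩ : ∃ n : ℕ, grpRank H = (n : ℕ∞) := by
    cases hc : grpRank H with
    | top => exact absurd hc hHne
    | coe n => exact ⟨n, rfl⟩
  rw [hn]
  exact_mod_cast (Nat.add_sub_cancel (n := n) (m := 1)).symm
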